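/- (Theorem 1) Let n, m be natural numbers with 0 < m < n, let y₁, …, y_n ∈ {0,1} (the indicators of success of the CHSH condition aᵢ ⊕ bᵢ = xᵢ ∧ yᵢ in each round), and let Γ_CHSH be a uniformly random subset of {1, …, n} of size m, with Γ_QPQ its complement of size n − m. Let Y = (1/m) Σ_{i∈Γ_CHSH} yᵢ and Y' = (1/(n−m)) Σ_{i∈Γ_QPQ} yᵢ. Then for any ε_QPQ ∈ (0, 1), with ν = √( ((m + 1) / (2 (1 − m/n) m²)) · ln(1/ε_QPQ) ), one has Pr[ Y' − Y ≥ ν ] ≤ ε_QPQ. In particular, if the fraction of rounds in Γ_CHSH satisfying the CHSH condition equals P − δ for some P, then with probability at least 1 − ε_QPQ the fraction of rounds in Γ_QPQ satisfying the CHSH condition is at most P − δ + ν. -/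

import Mathlib

/-!
Let `μ` be the mean of all `n` values and `M(A)` the mean of the values outside `A`. If `A` grows
by one uniformly random element of its complement, the increment of `M(A)` is centred and, when
`r` elements remain outside `A`, ranges over an interval of length `1 / (r - 1)`. Hoeffding's lemma
at each step, chained from `A = ∅` up to `|A| = n - m`, bounds the exponential moments of
`μ - M(A)` by those of a Gaussian of variance `(1/4) ∑_{j=m}^{n-1} 1/j² ≤ (n-m)(m+1) / (4 n m²)`.
Since `Y' - Y = n/(n-m) · (μ - M(Γ_QPQ))`, Chernoff's bound with the optimal exponent gives the
claim.
-/

open scoped Classical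
open Finset Real MeasureTheory ProbabilityTheory

theorem Finset.sum_exp_mul_le_of_sum_eq_zero {ι : Type*} (s : Finset ι) {f : ι → ℝ} {a b : ℝ}
    (hf : ∀ x ∈ s, f x ∈ Set.Icc a b) (hsum : ∑ x ∈ s, f x = 0) (t : ℝ) :
    ∑ x ∈ s, exp (t * f x) ≤ #s * exp ((b - a) ^ 2 * t ^ 2 / 8) := by
  rcases s.eq_empty_or_nonempty with rfl | ⟨x₀, hx₀⟩
  · simp
  let _ : MeasurableSpace s := ⊤
  have : Nonempty s := ⟨⟨x₀, hx₀⟩⟩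
  let μ := (PMF.uniformOfFintype s).toMeasure
  have hcard : (0 : ℝ) < #s := by exact_mod_cast card_pos.mpr ⟨x₀, hx₀⟩
  have hint (g : ι → ℝ) : ∫ x : s, g x ∂μ = (∑ x ∈ s, g x) / #s := by
    have : MeasurableSingletonClass s := ⟨fun _ => trivial⟩
    rw [PMF.integral_eq_sum, ← sum_coe_sort s g, sum_div]
    simp [PMF.uniformOfFintype_apply, div_eq_inv_mul]
  have hX := hasSubgaussianMGF_of_mem_Icc_of_integral_eq_zero (μ := μ) (X := fun x : s => f x)
    Measurable.of_discrete.aemeasurable (Filter.Eventually.of_forall fun x => hf x x.2)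
    (by rw [hint, hsum, zero_div])
  have hmgf := hX.mgf_le t
  rw [mgf, hint (fun x => exp (t * f x)), div_le_iff₀ hcard, mul_comm] at hmgf
  have hab : a ≤ b := (hf x₀ hx₀).1.trans (hf x₀ hx₀).2
  refine hmgf.trans_eq ?_
  congr 2
  rw [NNReal.coe_pow, NNReal.coe_div, NNReal.coe_ofNat, coe_nnnorm,
    Real.norm_of_nonneg (sub_nonneg.2 hab)]
  ring

theorem sum_range_one_div_add_sq_le {a : ℝ} (ha : 0 < a) (c : ℕ) :
    ∑ k ∈ range c, 1 / (a + k) ^ 2 ≤ c * (a + 1) / ((a + c) * a ^ 2) := by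
  induction c with
  | zero => simp
  | succ c ih =>
    rw [sum_range_succ]
    refine (add_le_add_left ih _).trans ?_
    have hc : (0 : ℝ) ≤ c := c.cast_nonneg
    have hac : 0 < a + c := by positivity
    rw [div_add_div _ _ (by positivity) (by positivity),
      div_le_div_iff₀ (by positivity) (by positivity)]
    push_cast
    nlinarith [mul_pos ha ha, mul_nonneg (mul_nonneg ha.le hc) (sq_nonneg (a + c)),
      mul_pos (mul_pos ha ha) (mul_pos hac hac)]

theorem one_sub_le_card_filter_div_of_imp {ι : Type*} [Fintype ι] [Nonempty ι] {p q : ι → Prop}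
    [DecidablePred p] [DecidablePred q] (hpq : ∀ x, ¬ p x → q x) {ε : ℝ}
    (hq : (#{x | q x} : ℝ) / #(univ : Finset ι) ≤ ε) :
    1 - ε ≤ (#{x | p x} : ℝ) / #(univ : Finset ι) := by
  have hpos : (0 : ℝ) < #(univ : Finset ι) := by exact_mod_cast univ_nonempty.card_pos
  have hsplit : (#{x | p x} : ℝ) + #{x | ¬ p x} = #(univ : Finset ι) := by
    exact_mod_cast card_filter_add_card_filter_not (s := univ) (p := p)
  have hnot : (#{x | ¬ p x} : ℝ) ≤ #{x | q x} := by
    exact_mod_cast card_le_card (monotone_filter_right _ fun x _ => hpq x)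
  rw [div_le_iff₀ hpos] at hq
  rw [le_div_iff₀ hpos]
  linarith

section SamplingWithoutReplacement

variable {α : Type*} [Fintype α] [DecidableEq α]

theorem card_filter_subtype_card_eq_compl {k : ℕ} (hk : k ≤ Fintype.card α)
    (p : Finset α → Prop) :
    #{Γ : {s : Finset α // #s = k} | p Γ.1}
      = #{B ∈ powersetCard (Fintype.card α - k) univ | p Bᶜ} := by
  have hcard {B : Finset α} (hB : B ∈ powersetCard (Fintype.card α - k) univ) : #Bᶜ = k := by
    rw [card_compl, mem_powersetCard_univ.mp hB]
    omega
  refine card_bij' (fun Γ _ => Γ.1ᶜ) (fun B hB => ⟨Bᶜ, hcard (mem_filter.mp hB).1⟩) (fun Γ hΓ => ?_)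
    (fun B hB => ?_) (fun Γ _ => by simp) (fun B _ => by simp)
  · simpa [mem_powersetCard_univ, card_compl, Γ.2] using hΓ
  · simpa using (mem_filter.mp hB).2

theorem sum_powersetCard_sum_compl_insert {M : Type*} [AddCommMonoid M] (k : ℕ)
    (g : Finset α → M) :
    ∑ A ∈ powersetCard k univ, ∑ x ∈ Aᶜ, g (insert x A)
      = (k + 1) • ∑ B ∈ powersetCard (k + 1) univ, g B := by
  rw [sum_sigma', smul_sum]
  have hB : ∀ B ∈ powersetCard (k + 1) (univ : Finset α), (k + 1) • g B = ∑ _x ∈ B, g B :=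
    fun B hB => by rw [sum_const, mem_powersetCard_univ.mp hB]
  rw [sum_congr rfl hB, sum_sigma']
  refine sum_nbij' (fun p => ⟨insert p.2 p.1, p.2⟩) (fun p => ⟨p.1.erase p.2, p.2⟩)
    ?_ ?_ ?_ ?_ ?_
  · rintro ⟨A, x⟩ h
    simp only [mem_sigma, mem_powersetCard_univ, mem_compl] at h ⊢
    exact ⟨by rw [card_insert_of_notMem h.2, h.1], mem_insert_self x A⟩
  · rintro ⟨B, x⟩ h
    simp only [mem_sigma, mem_powersetCard_univ, mem_compl] at h ⊢
    exact ⟨by rw [card_erase_of_mem h.2, h.1, Nat.add_sub_cancel], notMem_erase x B⟩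
  · rintro ⟨A, x⟩ h
    simp only [mem_sigma, mem_compl] at h
    simp [erase_insert h.2]
  · rintro ⟨B, x⟩ h
    simp only [mem_sigma] at h
    simp [insert_erase h.2]
  · rintro ⟨A, x⟩ -
    rfl

noncomputable def complMean (y : α → ℝ) (A : Finset α) : ℝ :=
  (∑ i ∈ Aᶜ, y i) / #Aᶜ

theorem complMean_insert (y : α → ℝ) {A : Finset α} {x : α} (hx : x ∈ Aᶜ) (hA : 2 ≤ #Aᶜ) :
    complMean y (insert x A) = complMean y A + (complMean y A - y x) / (#Aᶜ - 1) := by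
  have hr : (#Aᶜ : ℝ) - 1 ≠ 0 := by
    have : (2 : ℝ) ≤ #Aᶜ := by exact_mod_cast hA
    linarith
  rw [complMean, complMean, compl_insert, card_erase_of_mem hx, Nat.cast_pred (by omega),
    ← add_sum_erase Aᶜ y hx]
  field_simp
  ring

variable {y : α → ℝ}

theorem sum_exp_complMean_insert_le (hy : ∀ i, y i ∈ Set.Icc 0 1) {A : Finset α}
    (hA : 2 ≤ #Aᶜ) (t : ℝ) :
    ∑ x ∈ Aᶜ, exp (t * complMean y (insert x A))
      ≤ #Aᶜ * exp (t * complMean y A) * exp (t ^ 2 / 8 * (1 / (#Aᶜ - 1) ^ 2)) := by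
  set M := complMean y A
  set r : ℝ := #Aᶜ - 1
  have hr : 0 < r := by
    have : (2 : ℝ) ≤ #Aᶜ := by exact_mod_cast hA
    linarith
  have hcentered : ∑ x ∈ Aᶜ, (M - y x) / r = 0 := by
    have hpos : (0 : ℝ) < #Aᶜ := by linarith
    rw [← sum_div, sum_sub_distrib, sum_const, nsmul_eq_mul, div_eq_zero_iff, sub_eq_zero]
    left
    simp only [M, complMean]
    field_simp
  have hrange : ∀ x ∈ Aᶜ, (M - y x) / r ∈ Set.Icc ((M - 1) / r) (M / r) := fun x _ =>
    ⟨by gcongr; linarith [(hy x).2], by gcongr; linarith [(hy x).1]⟩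
  calc ∑ x ∈ Aᶜ, exp (t * complMean y (insert x A))
      = exp (t * M) * ∑ x ∈ Aᶜ, exp (t * ((M - y x) / r)) := by
        rw [mul_sum]
        refine sum_congr rfl fun x hx => ?_
        rw [complMean_insert y hx hA, ← exp_add, mul_add]
    _ ≤ exp (t * M) * (#Aᶜ * exp ((M / r - (M - 1) / r) ^ 2 * t ^ 2 / 8)) := by
        gcongr
        exact sum_exp_mul_le_of_sum_eq_zero Aᶜ hrange hcentered t
    _ = #Aᶜ * exp (t * M) * exp (t ^ 2 / 8 * (1 / r ^ 2)) := by
        rw [← sub_div, sub_sub_cancel]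
        field_simp

theorem sum_powersetCard_succ_exp_complMean_le (hy : ∀ i, y i ∈ Set.Icc 0 1) (t : ℝ) {j : ℕ}
    (hj : j + 1 < Fintype.card α) :
    ((j : ℝ) + 1) * ∑ B ∈ powersetCard (j + 1) univ, exp (t * complMean y B)
      ≤ ((Fintype.card α : ℝ) - j) * exp (t ^ 2 / 8 * (1 / ((Fintype.card α : ℝ) - j - 1) ^ 2))
        * ∑ A ∈ powersetCard j univ, exp (t * complMean y A) := by
  have hcompl : ∀ A ∈ powersetCard j (univ : Finset α), #Aᶜ = Fintype.card α - j :=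
    fun A hA => by rw [card_compl, mem_powersetCard_univ.mp hA]
  have hcount := sum_powersetCard_sum_compl_insert j fun B => exp (t * complMean y B)
  rw [nsmul_eq_mul] at hcount
  push_cast at hcount
  rw [← hcount, mul_sum]
  refine sum_le_sum fun A hA => ?_
  have h := sum_exp_complMean_insert_le hy (A := A) (by rw [hcompl A hA]; omega) t
  rw [hcompl A hA, Nat.cast_sub (by omega)] at h
  refine h.trans_eq ?_
  rw [sub_sub]
  ring

theorem sum_powersetCard_exp_complMean_le (hy : ∀ i, y i ∈ Set.Icc 0 1) (t : ℝ) {j : ℕ}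
    (hj : j < Fintype.card α) :
    ∑ B ∈ powersetCard j univ, exp (t * complMean y B)
      ≤ (Fintype.card α).choose j * exp (t * complMean y ∅
          + t ^ 2 / 8 * ∑ k ∈ range j, 1 / ((Fintype.card α : ℝ) - j + k) ^ 2) := by
  set N := Fintype.card α
  induction j with
  | zero => simp
  | succ j ih =>
    have hjN : (j : ℝ) + 1 < N := by exact_mod_cast hj
    have hchoose : ((N : ℝ) - j) * N.choose j = (j + 1) * N.choose (j + 1) := by
      have h : (N - j) * N.choose j = (j + 1) * N.choose (j + 1) := by
        rw [mul_comm, ← Nat.choose_succ_right_eq, mul_comm]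
      rw [← Nat.cast_sub (by omega)]
      exact_mod_cast h
    have hV : ∑ k ∈ range (j + 1), 1 / ((N : ℝ) - ↑(j + 1) + k) ^ 2
        = ∑ k ∈ range j, 1 / ((N : ℝ) - j + k) ^ 2 + 1 / ((N : ℝ) - j - 1) ^ 2 := by
      rw [sum_range_succ']
      push_cast
      congr 1
      · exact sum_congr rfl fun k _ => by ring_nf
      · ring_nf
    set E := exp (t ^ 2 / 8 * (1 / ((N : ℝ) - j - 1) ^ 2)) with hE
    refine le_of_mul_le_mul_left ?_ (by positivity : (0 : ℝ) < j + 1)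
    calc ((j : ℝ) + 1) * ∑ B ∈ powersetCard (j + 1) univ, exp (t * complMean y B)
        ≤ (N - j) * E * ∑ A ∈ powersetCard j univ, exp (t * complMean y A) :=
          sum_powersetCard_succ_exp_complMean_le hy t hj
      _ ≤ (N - j) * E * (N.choose j * exp (t * complMean y ∅
            + t ^ 2 / 8 * ∑ k ∈ range j, 1 / ((N : ℝ) - j + k) ^ 2)) := by
          gcongr
          · exact mul_nonneg (by linarith) (exp_pos _).le
          · exact ih (by omega)
      _ = _ := by
          rw [hV, mul_add, ← add_assoc, exp_add (t * complMean y ∅ + _), ← hE,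
            ← mul_assoc (_ + 1), ← hchoose]
          ring

theorem card_filter_le_sub_complMean_le (hy : ∀ i, y i ∈ Set.Icc 0 1) {j : ℕ}
    (hj : j < Fintype.card α) {l h : ℝ} (hh : 0 ≤ h) :
    (#{B ∈ powersetCard j univ | l ≤ complMean y ∅ - complMean y B} : ℝ)
      ≤ (Fintype.card α).choose j * exp (h ^ 2 / 8
          * ∑ k ∈ range j, 1 / ((Fintype.card α : ℝ) - j + k) ^ 2 - h * l) := by
  set P := powersetCard j (univ : Finset α)
  set μ := complMean y ∅
  have hmarkov : #{B ∈ P | l ≤ μ - complMean y B} • exp (h * l)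
      ≤ ∑ B ∈ P, exp (h * μ) * exp (-h * complMean y B) := by
    refine (card_nsmul_le_sum _ _ _ fun B hB => ?_).trans
      (sum_le_sum_of_subset_of_nonneg (filter_subset _ _) fun _ _ _ => by positivity)
    rw [← exp_add, exp_le_exp, neg_mul, ← sub_eq_add_neg, ← mul_sub]
    exact mul_le_mul_of_nonneg_left (mem_filter.mp hB).2 hh
  rw [nsmul_eq_mul, ← mul_sum] at hmarkov
  have hchain := sum_powersetCard_exp_complMean_le hy (-h) hj
  rw [exp_sub, ← mul_div_assoc, le_div_iff₀ (exp_pos _)]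
  refine hmarkov.trans ?_
  calc exp (h * μ) * ∑ B ∈ P, exp (-h * complMean y B)
      ≤ exp (h * μ) * ((Fintype.card α).choose j * exp (-h * μ
          + (-h) ^ 2 / 8 * ∑ k ∈ range j, 1 / ((Fintype.card α : ℝ) - j + k) ^ 2)) := by
        gcongr
    _ = _ := by
        rw [exp_add, neg_sq, neg_mul, exp_neg]
        field_simp

theorem mean_sub_mean_compl_eq (y : α → ℝ) {B : Finset α} (hB : B.Nonempty)
    (hBc : Bᶜ.Nonempty) :
    1 / (#B : ℝ) * ∑ i ∈ B, y i - 1 / #Bᶜ * ∑ i ∈ Bᶜ, y i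
      = Fintype.card α / #B * (complMean y ∅ - complMean y B) := by
  have h₁ : (0 : ℝ) < #B := by exact_mod_cast hB.card_pos
  have h₂ : (0 : ℝ) < #Bᶜ := by exact_mod_cast hBc.card_pos
  rw [complMean, complMean, compl_empty, card_univ, ← card_add_card_compl B,
    ← sum_add_sum_compl B y]
  push_cast
  field_simp
  ring

theorem card_filter_mean_sub_mean_ge_le (hy : ∀ i, y i ∈ Set.Icc 0 1) {m : ℕ} (hm : 0 < m)
    (hmN : m < Fintype.card α) {ν : ℝ} (hν : 0 ≤ ν) :
    (#{B ∈ powersetCard (Fintype.card α - m) univ |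
        ν ≤ 1 / ((Fintype.card α : ℝ) - m) * ∑ i ∈ B, y i - 1 / m * ∑ i ∈ Bᶜ, y i} : ℝ)
      ≤ (Fintype.card α).choose m
        * exp (-(2 * ((Fintype.card α : ℝ) - m) * m ^ 2 * ν ^ 2
            / (Fintype.card α * (m + 1)))) := by
  set N := Fintype.card α with hNdef
  have hm0 : (0 : ℝ) < m := by exact_mod_cast hm
  have hNm : (0 : ℝ) < N - m := by
    have : (m : ℝ) < N := by exact_mod_cast hmN
    linarith
  have hN : (0 : ℝ) < N := by linarith
  have hcast : ((N - m : ℕ) : ℝ) = N - m := Nat.cast_sub hmN.le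
  set l := (N - m) * ν / N
  set Vmax : ℝ := (N - m) * (m + 1) / (N * m ^ 2)
  have hVmax : 0 < Vmax := by positivity
  have hevent : ∀ B ∈ powersetCard (N - m) (univ : Finset α),
      ν ≤ 1 / ((N : ℝ) - m) * ∑ i ∈ B, y i - 1 / m * ∑ i ∈ Bᶜ, y i
        ↔ l ≤ complMean y ∅ - complMean y B := by
    intro B hB
    have hBcard : #B = N - m := mem_powersetCard_univ.mp hB
    have hBc : #Bᶜ = m := by rw [card_compl, hBcard, Nat.sub_sub_self hmN.le]
    have hmean := mean_sub_mean_compl_eq y (B := B) (card_pos.mp (by omega))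
      (card_pos.mp (by omega))
    rw [hBcard, hBc, hcast] at hmean
    rw [hmean, ← div_le_iff₀' (div_pos hN hNm), div_div_eq_mul_div, mul_comm]
  have hV : ∑ k ∈ range (N - m), 1 / ((N : ℝ) - ↑(N - m) + k) ^ 2 ≤ Vmax := by
    have h := sum_range_one_div_add_sq_le hm0 (N - m)
    rw [hcast, add_sub_cancel] at h
    simpa only [hcast, sub_sub_cancel] using h
  rw [filter_congr hevent, ← Nat.choose_symm hmN.le]
  -- `h = 4 l / Vmax` minimises `h² Vmax / 8 - h l`, the minimum being `-2 l² / Vmax`.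
  refine (card_filter_le_sub_complMean_le hy (Nat.sub_lt (by omega) hm)
    (by positivity : 0 ≤ 4 * l / Vmax)).trans ?_
  gcongr
  calc (4 * l / Vmax) ^ 2 / 8 * ∑ k ∈ range (N - m), 1 / ((N : ℝ) - ↑(N - m) + k) ^ 2
        - 4 * l / Vmax * l
      ≤ (4 * l / Vmax) ^ 2 / 8 * Vmax - 4 * l / Vmax * l := by gcongr
    _ = _ := by
        simp only [l, Vmax]
        field_simp
        ring

theorem card_filter_mean_compl_sub_mean_ge_div_le (hy : ∀ i, y i ∈ Set.Icc 0 1) {m : ℕ}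
    (hm : 0 < m) (hmN : m < Fintype.card α) {ν : ℝ} (hν : 0 ≤ ν) :
    (#{Γ : {s : Finset α // #s = m} |
        ν ≤ 1 / ((Fintype.card α : ℝ) - m) * ∑ i ∈ Γ.1ᶜ, y i - 1 / m * ∑ i ∈ Γ.1, y i} : ℝ)
        / #(univ : Finset {s : Finset α // #s = m})
      ≤ exp (-(2 * ((Fintype.card α : ℝ) - m) * m ^ 2 * ν ^ 2
          / (Fintype.card α * (m + 1)))) := by
  have hcompl := card_filter_subtype_card_eq_compl hmN.le
    fun s => ν ≤ 1 / ((Fintype.card α : ℝ) - m) * ∑ i ∈ sᶜ, y i - 1 / m * ∑ i ∈ s, y i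
  simp only [compl_compl] at hcompl
  have hchoose : (0 : ℝ) < (Fintype.card α).choose m := by
    exact_mod_cast Nat.choose_pos hmN.le
  rw [hcompl, card_univ, Fintype.card_finset_len, div_le_iff₀ hchoose, mul_comm]
  exact card_filter_mean_sub_mean_ge_le hy hm hmN hν

end SamplingWithoutReplacement

theorem two_mul_sub_mul_sq_mul_sq_div_eq_of_eq_sqrt {n m : ℕ} (hm : 0 < m) (hmn : m < n)
    {L ν : ℝ} (hL : 0 ≤ L)
    (hν : ν = sqrt (((m : ℝ) + 1) / (2 * (1 - (m : ℝ) / n) * m ^ 2) * L)) :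
    2 * ((n : ℝ) - m) * m ^ 2 * ν ^ 2 / (n * (m + 1)) = L := by
  have hmn' : (m : ℝ) < n := by exact_mod_cast hmn
  have hm0 : (0 : ℝ) < m := by exact_mod_cast hm
  have hnm : (0 : ℝ) < n - m := by linarith
  have hn : (0 : ℝ) < n := by linarith
  have hcoeff : 0 ≤ ((m : ℝ) + 1) / (2 * (1 - (m : ℝ) / n) * m ^ 2) := by
    rw [one_sub_div hn.ne']
    positivity
  rw [hν, sq_sqrt (mul_nonneg hcoeff hL), one_sub_div hn.ne']
  field_simp

theorem stmt_13 (n m : ℕ) (hm : 0 < m) (hmn : m < n)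
    (y : Fin n → ℝ) (hy : ∀ i, y i = 0 ∨ y i = 1)
    (εQPQ : ℝ) (hε : εQPQ ∈ Set.Ioo (0 : ℝ) 1)
    (ν : ℝ)
    (hν : ν = Real.sqrt ((((m : ℝ) + 1) / (2 * (1 - (m : ℝ) / n) * m ^ 2)) *
      Real.log (1 / εQPQ))) :
    (((Finset.univ.filter
        (fun Γ : {s : Finset (Fin n) // s.card = m} =>
          (1 / ((n : ℝ) - m)) * ∑ i ∈ Γ.1ᶜ, y i - (1 / m) * ∑ i ∈ Γ.1, y i ≥ ν)).card : ℝ) /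
      ((Finset.univ : Finset {s : Finset (Fin n) // s.card = m}).card : ℝ)
      ≤ εQPQ) ∧
    ∀ P δ : ℝ,
      (((Finset.univ.filter
          (fun Γ : {s : Finset (Fin n) // s.card = m} =>
            (1 / m) * ∑ i ∈ Γ.1, y i = P - δ →
              (1 / ((n : ℝ) - m)) * ∑ i ∈ Γ.1ᶜ, y i ≤ P - δ + ν)).card : ℝ) /
        ((Finset.univ : Finset {s : Finset (Fin n) // s.card = m}).card : ℝ)
        ≥ 1 - εQPQ) := by
  obtain ⟨hε0, hε1⟩ := hε
  have hy01 : ∀ i, y i ∈ Set.Icc 0 1 := fun i => by rcases hy i with h | h <;> simp [h]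
  have hlog : 0 ≤ log (1 / εQPQ) := log_nonneg (by rw [le_div_iff₀ hε0]; linarith)
  have htail := card_filter_mean_compl_sub_mean_ge_div_le hy01 hm (by simpa using hmn)
    (hν ▸ sqrt_nonneg _)
  rw [Fintype.card_fin, two_mul_sub_mul_sq_mul_sq_div_eq_of_eq_sqrt hm hmn hlog hν, exp_neg,
    exp_log (by positivity), inv_div, div_one] at htail
  have : Nonempty {s : Finset (Fin n) // s.card = m} :=
    Fintype.card_pos_iff.mp (by simpa using Nat.choose_pos hmn.le)
  simp only [ge_iff_le]
  refine ⟨htail, fun P δ => one_sub_le_card_filter_div_of_imp (fun Γ hΓ => ?_) htail⟩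
  by_contra hlt
  exact hΓ fun hY => by linarith [not_le.mp hlt]
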